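/- Let P(t,z) = zⁿ + p_{n−1}(t)z^{n−1} + ⋯ + p_0(t) with n ≥ 2, where each p_j : ℝ → ℂ is real-analytic and 1-periodic, and assume P is simple and locally completely reducible. Then: (i) there exist real-analytic functions λ₁, …, λₙ : ℝ → ℂ with P(t,z) = ∏_{j=1}^{n}(z − λ_j(t)) for all t ∈ ℝ and z ∈ ℂ; (ii) for any such λ₁, …, λₙ there exists a unique permutation σ of {1, …, n} with λ_j(t+1) = λ_{σ(j)}(t) for all t ∈ ℝ and all j; and (iii) P is completely reducible — i.e., there exist 1-periodic real-analytic μ₁, …, μₙ : ℝ → ℂ with P(t,z) = ∏_{j=1}^{n}(z − μ_j(t)) for all t — if and only if σ is the identity permutation. -/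

import Mathlib

/-!
Two analytic root families of `P` on a connected open set differ by a fixed permutation: at a
generic point, two roots take the same value only if they agree identically (isolated zeros).
Hence local factorizations glue along overlaps, and connectedness of `ℝ` yields a global one (i).
As `P` is 1-periodic, `t ↦ λ(t + 1)` is again a global analytic factorization, so it is `λ ∘ σ`.
If two roots coincided identically, the roots of multiplicity at least two would be permuted by
the shift, so their product `Q` would have periodic analytic coefficients and `Q²` would divide
`P`, contradicting simplicity. The roots are thus distinct functions, which makes `σ` unique (ii),
and since a periodic factorization is a permutation of `λ`, it exists iff `σ = 1` (iii).
-/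

open Set Filter Topology Polynomial

theorem Fintype.exists_perm_of_map_univ_eq {ι β : Type*} [Fintype ι] {f g : ι → β}
    (h : Finset.univ.val.map f = Finset.univ.val.map g) :
    ∃ σ : Equiv.Perm ι, ∀ i, g (σ i) = f i := by
  classical
  have hcard (c : β) : Fintype.card {i // f i = c} = Fintype.card {i // g i = c} := by
    simpa [Multiset.count_map, Fintype.card_subtype, Finset.card_def, eq_comm] using
      congrArg (Multiset.count c) h
  exact ⟨Equiv.ofFiberEquiv fun c ↦ Fintype.equivOfCardEq (hcard c), Equiv.ofFiberEquiv_map _⟩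

theorem Finset.map_univ_eq_of_forall_prod_sub_eq {ι R : Type*} [Fintype ι] [CommRing R]
    [IsDomain R] [Infinite R] {a b : ι → R} (h : ∀ z, ∏ i, (z - a i) = ∏ i, (z - b i)) :
    Finset.univ.val.map a = Finset.univ.val.map b := by
  have hpoly : ((univ.val.map a).map (X - C ·)).prod = ((univ.val.map b).map (X - C ·)).prod :=
    Polynomial.funext fun z ↦ by
      simp only [eval_multiset_prod, Multiset.map_map, Function.comp_def, eval_sub, eval_X, eval_C]
      exact h z
  simpa only [roots_multiset_prod_X_sub_C] using congrArg roots hpoly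

theorem Multiset.image_filter_one_lt_count {β : Type*} [DecidableEq β] {M : Multiset β}
    {f : β → β} (hf : Function.Injective f) (hM : M.map f = M) :
    (M.toFinset.filter (1 < M.count ·)).image f = M.toFinset.filter (1 < M.count ·) := by
  refine Finset.eq_of_subset_of_card_le (fun b hb ↦ ?_) (Finset.card_image_of_injective _ hf).ge
  obtain ⟨a, ha, rfl⟩ := Finset.mem_image.1 hb
  have hcount : M.count (f a) = M.count a := by
    conv_lhs => rw [← hM]
    exact Multiset.count_map_eq_count' f M hf a
  simp only [Finset.mem_filter, Multiset.mem_toFinset, hcount] at ha ⊢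
  exact ⟨hM ▸ Multiset.mem_map_of_mem f ha.1, ha.2⟩

section Analytic

variable {𝕜 E ι : Type*} [NontriviallyNormedField 𝕜] [NormedAddCommGroup E] [NormedSpace 𝕜 E]
  {U : Set 𝕜}

theorem AnalyticOnNhd.exists_mem_eqOn_zero_of_apply_eq_zero [Finite ι] {F : ι → 𝕜 → E}
    (hF : ∀ k, AnalyticOnNhd 𝕜 (F k) U) (hUo : IsOpen U) (hUc : IsPreconnected U)
    {x₀ : 𝕜} (hx₀ : x₀ ∈ U) : ∃ x ∈ U, ∀ k, F k x = 0 → EqOn (F k) 0 U := by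
  have hgeneric : ∀ k, ∀ᶠ x in 𝓝[≠] x₀, F k x = 0 → EqOn (F k) 0 U := fun k ↦ by
    rcases (hF k x₀ hx₀).eventually_eq_zero_or_eventually_ne_zero with hzero | hne
    · exact .of_forall fun _ _ ↦
        (hF k).eqOn_zero_of_preconnected_of_eventuallyEq_zero hUc hx₀ hzero
    · exact hne.mono fun _ hx h ↦ absurd h hx
  have hU : ∀ᶠ x in 𝓝[≠] x₀, x ∈ U := nhdsWithin_le_nhds (hUo.mem_nhds hx₀)
  exact (hU.and (eventually_all.2 hgeneric)).exists

theorem AnalyticOnNhd.exists_perm_eqOn_of_map_univ_eq [Fintype ι] {f g : ι → 𝕜 → E}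
    (hf : ∀ i, AnalyticOnNhd 𝕜 (f i) U) (hg : ∀ i, AnalyticOnNhd 𝕜 (g i) U)
    (hUo : IsOpen U) (hUc : IsPreconnected U) (hUne : U.Nonempty)
    (h : ∀ x ∈ U, Finset.univ.val.map (f · x) = Finset.univ.val.map (g · x)) :
    ∃ σ : Equiv.Perm ι, ∀ i, EqOn (f i) (g (σ i)) U := by
  obtain ⟨x₀, hx₀⟩ := hUne
  obtain ⟨x, hxU, hx⟩ := exists_mem_eqOn_zero_of_apply_eq_zero
    (F := fun ij : ι × ι ↦ f ij.1 - g ij.2) (fun ij ↦ (hf ij.1).sub (hg ij.2)) hUo hUc hx₀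
  obtain ⟨σ, hσ⟩ := Fintype.exists_perm_of_map_univ_eq (h x hxU)
  refine ⟨σ, fun i y hy ↦ ?_⟩
  simpa [sub_eq_zero] using hx (i, σ i) (by simp [hσ i]) hy

end Analytic

theorem IsPreconnected.inter_of_orderTopology {α : Type*} [ConditionallyCompleteLinearOrder α]
    [TopologicalSpace α] [OrderTopology α] [DenselyOrdered α] {s t : Set α}
    (hs : IsPreconnected s) (ht : IsPreconnected t) : IsPreconnected (s ∩ t) := by
  rw [isPreconnected_iff_ordConnected] at *
  exact hs.inter ht

section RootFamilies

variable {ι : Type*} [Fintype ι] {P : ℝ → ℂ → ℂ} {lam mu : ι → ℝ → ℂ} {U V : Set ℝ}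

def AnalyticRootsOn (P : ℝ → ℂ → ℂ) (lam : ι → ℝ → ℂ) (U : Set ℝ) : Prop :=
  (∀ i, AnalyticOnNhd ℝ (lam i) U) ∧ ∀ t ∈ U, ∀ z, P t z = ∏ i, (z - lam i t)

theorem AnalyticRootsOn.mono (h : AnalyticRootsOn P lam U) (hVU : V ⊆ U) :
    AnalyticRootsOn P lam V :=
  ⟨fun i ↦ (h.1 i).mono hVU, fun t ht ↦ h.2 t (hVU ht)⟩

theorem AnalyticRootsOn.comp_perm (h : AnalyticRootsOn P lam U) (σ : Equiv.Perm ι) :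
    AnalyticRootsOn P (fun i ↦ lam (σ i)) U :=
  ⟨fun i ↦ h.1 (σ i), fun t ht z ↦ by rw [h.2 t ht z, Equiv.prod_comp σ (fun i ↦ z - lam i t)]⟩

theorem analyticRootsOn_of_locally_eqOn
    (h : ∀ t ∈ U, ∃ V, IsOpen V ∧ t ∈ V ∧ ∃ mu : ι → ℝ → ℂ,
      AnalyticRootsOn P mu V ∧ ∀ i, EqOn (lam i) (mu i) V) :
    AnalyticRootsOn P lam U := by
  refine ⟨fun i t ht ↦ ?_, fun t ht z ↦ ?_⟩ <;> obtain ⟨V, hVo, htV, mu, hmu, heq⟩ := h t ht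
  · exact (hmu.1 i t htV).congr ((heq i).eventuallyEq_of_mem (hVo.mem_nhds htV)).symm
  · simp only [hmu.2 t htV z, heq _ htV]

theorem AnalyticRootsOn.exists_perm_eqOn (hlam : AnalyticRootsOn P lam U)
    (hmu : AnalyticRootsOn P mu U) (hUo : IsOpen U) (hUc : IsPreconnected U)
    (hUne : U.Nonempty) : ∃ σ : Equiv.Perm ι, ∀ i, EqOn (lam i) (mu (σ i)) U :=
  AnalyticOnNhd.exists_perm_eqOn_of_map_univ_eq hlam.1 hmu.1 hUo hUc hUne fun t ht ↦
    Finset.map_univ_eq_of_forall_prod_sub_eq fun z ↦ (hlam.2 t ht z).symm.trans (hmu.2 t ht z)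

theorem AnalyticRootsOn.exists_union (hlam : AnalyticRootsOn P lam U)
    (hmu : AnalyticRootsOn P mu V) (hUo : IsOpen U) (hVo : IsOpen V)
    (hUVc : IsPreconnected (U ∩ V)) (hUVne : (U ∩ V).Nonempty) :
    ∃ nu : ι → ℝ → ℂ, AnalyticRootsOn P nu (U ∪ V) := by
  classical
  obtain ⟨σ, hσ⟩ := (hlam.mono inter_subset_left).exists_perm_eqOn
    (hmu.mono inter_subset_right) (hUo.inter hVo) hUVc hUVne
  refine ⟨fun i ↦ U.piecewise (lam i) (mu (σ i)), analyticRootsOn_of_locally_eqOn ?_⟩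
  rintro t (htU | htV)
  · exact ⟨U, hUo, htU, lam, hlam, fun i ↦ piecewise_eqOn _ _ _⟩
  · refine ⟨V, hVo, htV, _, hmu.comp_perm σ, fun i s hs ↦ ?_⟩
    by_cases hsU : s ∈ U
    · simp only [piecewise_eq_of_mem _ _ _ hsU, hσ i ⟨hsU, hs⟩]
    · simp only [piecewise_eq_of_notMem _ _ _ hsU]

theorem exists_analyticRootsOn_of_locally
    (hloc : ∀ s : ℝ, ∃ δ : ℝ, 0 < δ ∧ ∃ lam : ι → ℝ → ℂ,
      AnalyticRootsOn P lam (Ioo (s - δ) (s + δ))) (x y : ℝ) :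
    ∃ U, IsOpen U ∧ IsPreconnected U ∧ x ∈ U ∧ y ∈ U ∧
      ∃ lam : ι → ℝ → ℂ, AnalyticRootsOn P lam U := by
  refine isPreconnected_univ.induction₂' (fun x y ↦ ∃ U, IsOpen U ∧ IsPreconnected U ∧ x ∈ U ∧
      y ∈ U ∧ ∃ lam : ι → ℝ → ℂ, AnalyticRootsOn P lam U)
    (fun x _ ↦ ?_) (fun x y z _ _ _ hxy hyz ↦ ?_) (mem_univ x) (mem_univ y)
  · obtain ⟨δ, hδ, lam, hlam⟩ := hloc x
    have hx : x ∈ Ioo (x - δ) (x + δ) := ⟨by linarith, by linarith⟩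
    rw [nhdsWithin_univ]
    filter_upwards [isOpen_Ioo.mem_nhds hx] with y hy
    exact ⟨⟨_, isOpen_Ioo, isPreconnected_Ioo, hx, hy, lam, hlam⟩,
      ⟨_, isOpen_Ioo, isPreconnected_Ioo, hy, hx, lam, hlam⟩⟩
  · obtain ⟨U, hUo, hUc, hxU, hyU, lam, hlam⟩ := hxy
    obtain ⟨V, hVo, hVc, hyV, hzV, mu, hmu⟩ := hyz
    obtain ⟨nu, hnu⟩ := hlam.exists_union hmu hUo hVo (hUc.inter_of_orderTopology hVc)
      ⟨y, hyU, hyV⟩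
    exact ⟨U ∪ V, hUo.union hVo, hUc.union y hyU hyV hVc, .inl hxU, .inr hzV, nu, hnu⟩

theorem exists_analyticRootsOn_univ
    (hloc : ∀ s : ℝ, ∃ δ : ℝ, 0 < δ ∧ ∃ lam : ι → ℝ → ℂ,
      AnalyticRootsOn P lam (Ioo (s - δ) (s + δ))) :
    ∃ lam : ι → ℝ → ℂ, AnalyticRootsOn P lam univ := by
  obtain ⟨U₀, hU₀o, hU₀c, h0, -, lam₀, hlam₀⟩ := exists_analyticRootsOn_of_locally hloc 0 0
  -- normalize every factorization against `lam₀` near `0`, so that any two of them agree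
  have hnormalized (t : ℝ) : ∃ U, IsOpen U ∧ IsPreconnected U ∧ 0 ∈ U ∧ t ∈ U ∧
      ∃ Λ : ι → ℝ → ℂ, AnalyticRootsOn P Λ U ∧ ∀ i, EqOn (lam₀ i) (Λ i) (U ∩ U₀) := by
    obtain ⟨U, hUo, hUc, h0U, htU, Λ, hΛ⟩ := exists_analyticRootsOn_of_locally hloc 0 t
    obtain ⟨σ, hσ⟩ := (hlam₀.mono inter_subset_right).exists_perm_eqOn
      (hΛ.mono inter_subset_left) (hUo.inter hU₀o) (hUc.inter_of_orderTopology hU₀c) ⟨0, h0U, h0⟩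
    exact ⟨U, hUo, hUc, h0U, htU, _, hΛ.comp_perm σ, hσ⟩
  choose U hUo hUc h0U htU Λ hΛ hΛ₀ using hnormalized
  have hcompat (s t : ℝ) (i : ι) : EqOn (Λ s i) (Λ t i) (U s ∩ U t) := by
    refine (((hΛ s).1 i).mono inter_subset_left).eqOn_of_preconnected_of_eventuallyEq
      (((hΛ t).1 i).mono inter_subset_right) ((hUc s).inter_of_orderTopology (hUc t))
      (z₀ := 0) ⟨h0U s, h0U t⟩ ?_
    filter_upwards [((hUo s).inter hU₀o).mem_nhds ⟨h0U s, h0⟩,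
      ((hUo t).inter hU₀o).mem_nhds ⟨h0U t, h0⟩] with x hxs hxt
    exact (hΛ₀ s i hxs).symm.trans (hΛ₀ t i hxt)
  exact ⟨fun i t ↦ Λ t i t, analyticRootsOn_of_locally_eqOn fun t _ ↦
    ⟨U t, hUo t, htU t, Λ t, hΛ t, fun i s hs ↦ hcompat s t i ⟨htU s, hs⟩⟩⟩

end RootFamilies

section RootPoly

variable {α R : Type*} [CommRing R]

noncomputable def rootPoly (s : Multiset (α → R)) (a : α) : R[X] :=
  ((s.map (· a)).map fun r ↦ X - C r).prod

theorem rootPoly_add (s s' : Multiset (α → R)) (a : α) :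
    rootPoly (s + s') a = rootPoly s a * rootPoly s' a := by
  simp only [rootPoly, Multiset.map_add, Multiset.prod_add]

theorem rootPoly_map (s : Multiset (α → R)) (g : α → α) (a : α) :
    rootPoly (s.map (· ∘ g)) a = rootPoly s (g a) := by
  simp only [rootPoly, Multiset.map_map, Function.comp_def]

theorem rootPoly_monic (s : Multiset (α → R)) (a : α) : (rootPoly s a).Monic :=
  monic_multiset_prod_of_monic _ _ fun r _ ↦ monic_X_sub_C r

theorem natDegree_rootPoly [Nontrivial R] (s : Multiset (α → R)) (a : α) :
    (rootPoly s a).natDegree = Multiset.card s := by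
  rw [rootPoly, natDegree_multiset_prod_X_sub_C_eq_card, Multiset.card_map]

theorem eval_rootPoly_map_univ {ι : Type*} [Fintype ι] (lam : ι → α → R) (a : α) (z : R) :
    eval z (rootPoly (Finset.univ.val.map lam) a) = ∏ i, (z - lam i a) := by
  simp only [rootPoly, eval_multiset_prod, Multiset.map_map, Function.comp_def, eval_sub, eval_X,
    eval_C]
  rfl

end RootPoly

section AnalyticCoeff

variable {𝕜 A : Type*} [NontriviallyNormedField 𝕜] [NormedCommRing A] [NormedAlgebra 𝕜 A]

theorem analyticAt_coeff_mul {p q : 𝕜 → A[X]} {x : 𝕜}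
    (hp : ∀ k, AnalyticAt 𝕜 (fun y ↦ (p y).coeff k) x)
    (hq : ∀ k, AnalyticAt 𝕜 (fun y ↦ (q y).coeff k) x) (k : ℕ) :
    AnalyticAt 𝕜 (fun y ↦ (p y * q y).coeff k) x := by
  simp only [coeff_mul]
  exact Finset.analyticAt_fun_sum _ fun ij _ ↦ (hp ij.1).mul (hq ij.2)

theorem analyticAt_coeff_rootPoly {s : Multiset (𝕜 → A)} {x : 𝕜}
    (hs : ∀ φ ∈ s, AnalyticAt 𝕜 φ x) (k : ℕ) :
    AnalyticAt 𝕜 (fun y ↦ (rootPoly s y).coeff k) x := by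
  induction s using Multiset.induction_on generalizing k with
  | empty => simp [rootPoly, coeff_one, analyticAt_const]
  | cons φ s ih =>
    simp only [rootPoly, Multiset.map_cons, Multiset.prod_cons] at ih ⊢
    refine analyticAt_coeff_mul (fun j ↦ ?_) (ih fun ψ hψ ↦ hs ψ (Multiset.mem_cons_of_mem hψ)) k
    have hφ := hs φ (Multiset.mem_cons_self φ s)
    simp only [coeff_sub, coeff_X, coeff_C]
    split_ifs <;> fun_prop

end AnalyticCoeff

def HasSquareFactor (n : ℕ) (p : Fin n → ℝ → ℂ) : Prop :=
  ∃ d : ℕ, 1 ≤ d ∧ ∃ qc : Fin d → ℝ → ℂ, ∃ r : Fin (n + 1) → ℝ → ℂ,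
    (∀ j, ∀ t : ℝ, AnalyticAt ℝ (qc j) t) ∧ (∀ j, ∀ t : ℝ, qc j (t + 1) = qc j t) ∧
    (∀ j, ∀ t : ℝ, AnalyticAt ℝ (r j) t) ∧ (∀ j, ∀ t : ℝ, r j (t + 1) = r j t) ∧
    ∀ (t : ℝ) (z : ℂ),
      z ^ n + ∑ j, p j t * z ^ (j : ℕ) =
        (z ^ d + ∑ j, qc j t * z ^ (j : ℕ)) ^ 2 * (∑ j, r j t * z ^ (j : ℕ))

theorem hasSquareFactor_of_eq_sq_mul {n d : ℕ} {p : Fin n → ℝ → ℂ} (hd : 1 ≤ d)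
    {Q R : ℝ → ℂ[X]} (hQ : ∀ t, (Q t).Monic ∧ (Q t).natDegree = d)
    (hR : ∀ t, (R t).natDegree ≤ n)
    (hQan : ∀ k t, AnalyticAt ℝ (fun s ↦ (Q s).coeff k) t)
    (hRan : ∀ k t, AnalyticAt ℝ (fun s ↦ (R s).coeff k) t)
    (hQper : ∀ t, Q (t + 1) = Q t) (hRper : ∀ t, R (t + 1) = R t)
    (hPQR : ∀ t z, z ^ n + ∑ j, p j t * z ^ (j : ℕ) = eval z (Q t ^ 2 * R t)) :
    HasSquareFactor n p := by
  refine ⟨d, hd, fun j t ↦ (Q t).coeff j, fun j t ↦ (R t).coeff j, fun j ↦ hQan j,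
    fun j t ↦ by simp only [hQper], fun j ↦ hRan j, fun j t ↦ by simp only [hRper], fun t z ↦ ?_⟩
  have hQeval : eval z (Q t) = z ^ d + ∑ j : Fin d, (Q t).coeff j * z ^ (j : ℕ) := by
    conv_lhs => rw [(hQ t).1.as_sum]
    simp [eval_finsetSum, (hQ t).2, Fin.sum_univ_eq_sum_range (fun j ↦ (Q t).coeff j * z ^ j)]
  have hReval : eval z (R t) = ∑ j : Fin (n + 1), (R t).coeff j * z ^ (j : ℕ) := by
    rw [eval_eq_sum_range' (Nat.lt_succ_of_le (hR t)),
      Fin.sum_univ_eq_sum_range (fun j ↦ (R t).coeff j * z ^ j)]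
  rw [hPQR, eval_mul, eval_pow, hQeval, hReval]

section Periodic

variable {ι : Type*} [Fintype ι] {P : ℝ → ℂ → ℂ} {lam : ι → ℝ → ℂ}

theorem analyticRootsOn_univ_iff : AnalyticRootsOn P lam univ ↔
    (∀ i t, AnalyticAt ℝ (lam i) t) ∧ ∀ t z, P t z = ∏ i, (z - lam i t) := by
  simp [AnalyticRootsOn, AnalyticOnNhd]

theorem AnalyticRootsOn.shift (hP : ∀ t, P (t + 1) = P t) (hlam : AnalyticRootsOn P lam univ) :
    AnalyticRootsOn P (fun i t ↦ lam i (t + 1)) univ := by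
  rw [analyticRootsOn_univ_iff] at hlam ⊢
  refine ⟨fun i t ↦ ?_, fun t z ↦ by rw [← hP, hlam.2]⟩
  exact (hlam.1 i (t + 1)).comp (f := (· + 1)) (analyticAt_id.add analyticAt_const)

theorem AnalyticRootsOn.exists_perm_shift (hP : ∀ t, P (t + 1) = P t)
    (hlam : AnalyticRootsOn P lam univ) :
    ∃ σ : Equiv.Perm ι, ∀ j t, lam j (t + 1) = lam (σ j) t := by
  obtain ⟨σ, hσ⟩ := (hlam.shift hP).exists_perm_eqOn hlam isOpen_univ isPreconnected_univ
    univ_nonempty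
  exact ⟨σ, fun j t ↦ hσ j (mem_univ t)⟩

theorem AnalyticRootsOn.map_univ_shift (hP : ∀ t, P (t + 1) = P t)
    (hlam : AnalyticRootsOn P lam univ) :
    (Finset.univ.val.map lam).map (· ∘ (· + 1)) = Finset.univ.val.map lam := by
  obtain ⟨σ, hσ⟩ := hlam.exists_perm_shift hP
  have hcomp : (fun i ↦ lam i ∘ (· + 1)) = lam ∘ σ := funext fun i ↦ funext (hσ i)
  rw [Multiset.map_map, Function.comp_def, hcomp, ← Multiset.map_map,
    Multiset.map_univ_val_equiv]

theorem AnalyticRootsOn.existsUnique_perm_shift (hP : ∀ t, P (t + 1) = P t)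
    (hlam : AnalyticRootsOn P lam univ) (hinj : Function.Injective lam) :
    ∃! σ : Equiv.Perm ι, ∀ j t, lam j (t + 1) = lam (σ j) t := by
  obtain ⟨σ, hσ⟩ := hlam.exists_perm_shift hP
  refine ⟨σ, hσ, fun τ hτ ↦ Equiv.ext fun j ↦ hinj (funext fun t ↦ ?_)⟩
  rw [← hτ, hσ]

theorem AnalyticRootsOn.exists_periodic_iff (hlam : AnalyticRootsOn P lam univ)
    (hinj : Function.Injective lam) {σ : Equiv.Perm ι}
    (hσ : ∀ j t, lam j (t + 1) = lam (σ j) t) :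
    (∃ mu : ι → ℝ → ℂ, AnalyticRootsOn P mu univ ∧ ∀ i t, mu i (t + 1) = mu i t) ↔ σ = 1 := by
  constructor
  · rintro ⟨mu, hmu, hmu_per⟩
    obtain ⟨τ, hτ⟩ := hlam.exists_perm_eqOn hmu isOpen_univ isPreconnected_univ univ_nonempty
    refine Equiv.ext fun j ↦ hinj (funext fun t ↦ ?_)
    rw [Equiv.Perm.one_apply, ← hσ, hτ j (mem_univ _), hτ j (mem_univ _), hmu_per]
  · rintro rfl
    exact ⟨lam, hlam, hσ⟩

end Periodic

theorem hasSquareFactor_of_not_nodup {n : ℕ} {p : Fin n → ℝ → ℂ} {M : Multiset (ℝ → ℂ)}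
    (hMan : ∀ φ ∈ M, ∀ t, AnalyticAt ℝ φ t) (hcard : Multiset.card M = n)
    (hshift : M.map (· ∘ (· + 1)) = M) (hM : ¬ M.Nodup)
    (hPM : ∀ t z, z ^ n + ∑ j, p j t * z ^ (j : ℕ) = eval z (rootPoly M t)) :
    HasSquareFactor n p := by
  classical
  set S := M.toFinset.filter (1 < M.count ·)
  have hshift_inj : Function.Injective (· ∘ (· + 1) : (ℝ → ℂ) → ℝ → ℂ) :=
    fun φ ψ h ↦ funext fun t ↦ by simpa using congrFun h (t - 1)
  have hSne : S.Nonempty := by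
    obtain ⟨φ, hφ⟩ : ∃ φ, 1 < M.count φ := by simpa [Multiset.nodup_iff_count_le_one] using hM
    exact ⟨φ, Finset.mem_filter.2 ⟨Multiset.mem_toFinset.2 (Multiset.count_pos.1 (by omega)), hφ⟩⟩
  have hSM : S.val + S.val ≤ M := Multiset.le_iff_count.2 fun φ ↦ by
    rw [Multiset.count_add, Multiset.count_eq_of_nodup S.nodup]
    split_ifs with h
    · exact (Finset.mem_filter.1 h).2
    · simp
  have hQper (t : ℝ) : rootPoly S.val (t + 1) = rootPoly S.val t := by
    rw [← rootPoly_map S.val (· + 1), ← Finset.image_val_of_injOn hshift_inj.injOn,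
      Multiset.image_filter_one_lt_count hshift_inj hshift]
  have hMper (t : ℝ) : rootPoly M (t + 1) = rootPoly M t := by rw [← rootPoly_map M (· + 1), hshift]
  have hsplit (t : ℝ) :
      rootPoly M t = rootPoly S.val t ^ 2 * rootPoly (M - (S.val + S.val)) t := by
    conv_lhs => rw [← add_tsub_cancel_of_le hSM]
    rw [rootPoly_add, rootPoly_add, sq]
  refine hasSquareFactor_of_eq_sq_mul (Q := rootPoly S.val) (R := rootPoly (M - (S.val + S.val)))
    hSne.card_pos
    (fun t ↦ ⟨rootPoly_monic _ _, natDegree_rootPoly _ _⟩) (fun t ↦ ?_)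
    (fun k t ↦ analyticAt_coeff_rootPoly (fun φ hφ ↦ hMan φ ?_ t) k)
    (fun k t ↦ analyticAt_coeff_rootPoly (fun φ hφ ↦ hMan φ ?_ t) k) hQper (fun t ↦ ?_)
    (fun t z ↦ by rw [hPM, hsplit])
  · rw [natDegree_rootPoly, ← hcard]
    exact Multiset.card_le_card tsub_le_self
  · exact Multiset.mem_toFinset.1 (Finset.mem_filter.1 hφ).1
  · exact Multiset.mem_of_le tsub_le_self hφ
  · have h := hsplit (t + 1)
    rw [hMper, hsplit t, hQper] at h
    exact (mul_left_cancel₀ (pow_ne_zero 2 (rootPoly_monic _ _).ne_zero) h).symm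

theorem AnalyticRootsOn.injective_of_not_hasSquareFactor {n : ℕ} {p : Fin n → ℝ → ℂ}
    (hp_per : ∀ j t, p j (t + 1) = p j t) (hsimple : ¬ HasSquareFactor n p)
    {lam : Fin n → ℝ → ℂ}
    (hlam : AnalyticRootsOn (fun t z ↦ z ^ n + ∑ j, p j t * z ^ (j : ℕ)) lam univ) :
    Function.Injective lam := by
  by_contra hinj
  refine hsimple (hasSquareFactor_of_not_nodup ?_ (by simp)
    (hlam.map_univ_shift fun t ↦ by simp only [hp_per])
    (by rwa [Fintype.nodup_map_univ_iff_injective]) fun t z ↦ ?_)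
  · simp only [Multiset.mem_map]
    rintro _ ⟨i, -, rfl⟩ t
    exact hlam.1 i t (mem_univ t)
  · rw [eval_rootPoly_map_univ]
    exact hlam.2 t (mem_univ t) z

theorem stmt_16_general (n : ℕ) (p : Fin n → ℝ → ℂ)
    (hp_per : ∀ j, ∀ t : ℝ, p j (t + 1) = p j t)
    (hsimple : ¬ ∃ d : ℕ, 1 ≤ d ∧ ∃ qc : Fin d → ℝ → ℂ, ∃ r : Fin (n + 1) → ℝ → ℂ,
      (∀ j, ∀ t : ℝ, AnalyticAt ℝ (qc j) t) ∧ (∀ j, ∀ t : ℝ, qc j (t + 1) = qc j t) ∧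
      (∀ j, ∀ t : ℝ, AnalyticAt ℝ (r j) t) ∧ (∀ j, ∀ t : ℝ, r j (t + 1) = r j t) ∧
      ∀ (t : ℝ) (z : ℂ),
        z ^ n + ∑ j, p j t * z ^ (j : ℕ) =
          (z ^ d + ∑ j, qc j t * z ^ (j : ℕ)) ^ 2 * (∑ j, r j t * z ^ (j : ℕ)))
    (hLCR : ∀ s : ℝ, ∃ δ : ℝ, 0 < δ ∧ ∃ lam : Fin n → ℝ → ℂ,
      (∀ i, AnalyticOnNhd ℝ (lam i) (Set.Ioo (s - δ) (s + δ))) ∧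
      ∀ t ∈ Set.Ioo (s - δ) (s + δ), ∀ z : ℂ,
        z ^ n + ∑ j, p j t * z ^ (j : ℕ) = ∏ i, (z - lam i t)) :
    -- (i)
    (∃ lam : Fin n → ℝ → ℂ,
      (∀ i, ∀ t : ℝ, AnalyticAt ℝ (lam i) t) ∧
      ∀ (t : ℝ) (z : ℂ),
        z ^ n + ∑ j, p j t * z ^ (j : ℕ) = ∏ i, (z - lam i t)) ∧
    -- (ii)
    (∀ lam : Fin n → ℝ → ℂ,
      (∀ i, ∀ t : ℝ, AnalyticAt ℝ (lam i) t) →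
      (∀ (t : ℝ) (z : ℂ),
        z ^ n + ∑ j, p j t * z ^ (j : ℕ) = ∏ i, (z - lam i t)) →
      ∃! σ : Equiv.Perm (Fin n), ∀ (j : Fin n) (t : ℝ), lam j (t + 1) = lam (σ j) t) ∧
    -- (iii)
    (∀ lam : Fin n → ℝ → ℂ,
      (∀ i, ∀ t : ℝ, AnalyticAt ℝ (lam i) t) →
      (∀ (t : ℝ) (z : ℂ),
        z ^ n + ∑ j, p j t * z ^ (j : ℕ) = ∏ i, (z - lam i t)) →
      ∀ σ : Equiv.Perm (Fin n),
        (∀ (j : Fin n) (t : ℝ), lam j (t + 1) = lam (σ j) t) →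
        ((∃ mu : Fin n → ℝ → ℂ,
            (∀ i, ∀ t : ℝ, AnalyticAt ℝ (mu i) t) ∧
            (∀ i, ∀ t : ℝ, mu i (t + 1) = mu i t) ∧
            ∀ (t : ℝ) (z : ℂ),
              z ^ n + ∑ j, p j t * z ^ (j : ℕ) = ∏ i, (z - mu i t))
          ↔ σ = 1)) := by
  have hP (t : ℝ) : (fun t z ↦ z ^ n + ∑ j, p j t * z ^ (j : ℕ)) (t + 1) =
      (fun t z ↦ z ^ n + ∑ j, p j t * z ^ (j : ℕ)) t := by simp only [hp_per]
  obtain ⟨lam₀, hlam₀⟩ := exists_analyticRootsOn_univ hLCR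
  refine ⟨⟨lam₀, analyticRootsOn_univ_iff.1 hlam₀⟩, fun lam han hfac ↦ ?_,
    fun lam han hfac σ hσ ↦ ?_⟩
  all_goals
    have hlam := analyticRootsOn_univ_iff.2 ⟨han, hfac⟩
    have hinj := hlam.injective_of_not_hasSquareFactor hp_per hsimple
  · exact hlam.existsUnique_perm_shift hP hinj
  · rw [← hlam.exists_periodic_iff hinj hσ]
    exact exists_congr fun mu ↦ by rw [analyticRootsOn_univ_iff]; tauto

/-- Let `P(t,z) = zⁿ + ∑ p_j(t) z^j`, `n ≥ 2`, have coefficients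
real-analytic and 1-periodic on `ℝ`, and assume `P` is simple and locally completely
reducible.  Then (i) `P` has a global factorization `P(t,z) = ∏ (z - λ_j(t))` with each
`λ_j : ℝ → ℂ` real-analytic; (ii) for any such factorization there is a unique permutation
`σ` with `λ_j(t+1) = λ_{σ(j)}(t)` for all `t, j`; and (iii) `P` is completely reducible
(it has such a factorization with 1-periodic real-analytic roots) iff `σ` is the identity. -/
theorem stmt_16 (n : ℕ) (hn : 2 ≤ n) (p : Fin n → ℝ → ℂ)
    (hp_an : ∀ j, ∀ t : ℝ, AnalyticAt ℝ (p j) t)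
    (hp_per : ∀ j, ∀ t : ℝ, p j (t + 1) = p j t)
    (hsimple : ¬ ∃ d : ℕ, 1 ≤ d ∧ ∃ qc : Fin d → ℝ → ℂ, ∃ r : Fin (n + 1) → ℝ → ℂ,
      (∀ j, ∀ t : ℝ, AnalyticAt ℝ (qc j) t) ∧ (∀ j, ∀ t : ℝ, qc j (t + 1) = qc j t) ∧
      (∀ j, ∀ t : ℝ, AnalyticAt ℝ (r j) t) ∧ (∀ j, ∀ t : ℝ, r j (t + 1) = r j t) ∧
      ∀ (t : ℝ) (z : ℂ),
        z ^ n + ∑ j, p j t * z ^ (j : ℕ) =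
          (z ^ d + ∑ j, qc j t * z ^ (j : ℕ)) ^ 2 * (∑ j, r j t * z ^ (j : ℕ)))
    (hLCR : ∀ s : ℝ, ∃ δ : ℝ, 0 < δ ∧ ∃ lam : Fin n → ℝ → ℂ,
      (∀ i, AnalyticOnNhd ℝ (lam i) (Set.Ioo (s - δ) (s + δ))) ∧
      ∀ t ∈ Set.Ioo (s - δ) (s + δ), ∀ z : ℂ,
        z ^ n + ∑ j, p j t * z ^ (j : ℕ) = ∏ i, (z - lam i t)) :
    -- (i)
    (∃ lam : Fin n → ℝ → ℂ,
      (∀ i, ∀ t : ℝ, AnalyticAt ℝ (lam i) t) ∧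
      ∀ (t : ℝ) (z : ℂ),
        z ^ n + ∑ j, p j t * z ^ (j : ℕ) = ∏ i, (z - lam i t)) ∧
    -- (ii)
    (∀ lam : Fin n → ℝ → ℂ,
      (∀ i, ∀ t : ℝ, AnalyticAt ℝ (lam i) t) →
      (∀ (t : ℝ) (z : ℂ),
        z ^ n + ∑ j, p j t * z ^ (j : ℕ) = ∏ i, (z - lam i t)) →
      ∃! σ : Equiv.Perm (Fin n), ∀ (j : Fin n) (t : ℝ), lam j (t + 1) = lam (σ j) t) ∧
    -- (iii)
    (∀ lam : Fin n → ℝ → ℂ,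
      (∀ i, ∀ t : ℝ, AnalyticAt ℝ (lam i) t) →
      (∀ (t : ℝ) (z : ℂ),
        z ^ n + ∑ j, p j t * z ^ (j : ℕ) = ∏ i, (z - lam i t)) →
      ∀ σ : Equiv.Perm (Fin n),
        (∀ (j : Fin n) (t : ℝ), lam j (t + 1) = lam (σ j) t) →
        ((∃ mu : Fin n → ℝ → ℂ,
            (∀ i, ∀ t : ℝ, AnalyticAt ℝ (mu i) t) ∧
            (∀ i, ∀ t : ℝ, mu i (t + 1) = mu i t) ∧
            ∀ (t : ℝ) (z : ℂ),
              z ^ n + ∑ j, p j t * z ^ (j : ℕ) = ∏ i, (z - mu i t))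
          ↔ σ = 1)) :=
  stmt_16_general n p hp_per hsimple hLCR
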